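/- Gluing empty shapes: let P be a set of points and S a set of points with ConvexPoints S, a, b ∈ S. If both S⁻ = {x ∈ S | σ(a,b,x) ≠ ccw} and S⁺ = {x ∈ S | σ(a,b,x) ≠ cw} carve out empty shapes in P, then S carves out an empty shape in P. -/

import Mathlib

abbrev Point : Type := EuclideanSpace ℝ (Fin 2)

noncomputable def Point.x (p : Point) : ℝ := p 0
noncomputable def Point.y (p : Point) : ℝ := p 1

noncomputable def Point.mk' (a b : ℝ) : Point := WithLp.toLp 2 ![a, b]

inductive Orient : Type where
  | cw
  | ccw
  | collinear
deriving DecidableEq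

def Orient.neg : Orient → Orient
  | .cw => .ccw
  | .ccw => .cw
  | .collinear => .collinear

noncomputable def σ (p q r : Point) : Orient :=
  let det := Matrix.det !![p.x, q.x, r.x; p.y, q.y, r.y; 1, 1, 1]
  if 0 < det then .ccw
  else if det < 0 then .cw
  else .collinear

def EmptyShapeIn (S P : Set Point) : Prop :=
  ∀ p ∈ P \ S, p ∉ convexHull ℝ S

def ConvexPoints (S : Set Point) : Prop :=
  ∀ a ∈ S, a ∉ convexHull ℝ (S \ {a})

def ConvexEmptyIn (S P : Set Point) : Prop :=
  ConvexPoints S ∧ EmptyShapeIn S P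

def HasEmptyKGon (k : ℕ) (S : Set Point) : Prop :=
  ∃ s : Finset Point, s.card = k ∧ ↑s ⊆ S ∧ ConvexEmptyIn ↑s S

def PtInTriangle (a p q r : Point) : Prop :=
  a ∈ convexHull ℝ {p, q, r}

def σPtInTriangle (a p q r : Point) : Prop :=
  σ p q a = σ p q r ∧ σ p a r = σ p q r ∧ σ a q r = σ p q r

def σIsEmptyTriangleFor (a b c : Point) (S : Set Point) : Prop :=
  ∀ s ∈ S, ¬σPtInTriangle s a b c

def σHasEmptyKGon (k : ℕ) (S : Set Point) : Prop :=
  ∃ s : Finset Point, s.card = k ∧ ↑s ⊆ S ∧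
    ∀ a ∈ s, ∀ b ∈ s, ∀ c ∈ s, a ≠ b → a ≠ c → b ≠ c → σIsEmptyTriangleFor a b c S

def InGenPos₃ (p q r : Point) : Prop := σ p q r ≠ .collinear

def InGenPos₄ (p q r s : Point) : Prop :=
  InGenPos₃ p q r ∧ InGenPos₃ p q s ∧ InGenPos₃ p r s ∧ InGenPos₃ q r s

def ListInGenPos (l : List Point) : Prop :=
  ∀ p q r : Point, [p, q, r].Sublist l → InGenPos₃ p q r

def Sorted₄ (p q r s : Point) : Prop :=
  p.x < q.x ∧ q.x < r.x ∧ r.x < s.x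

noncomputable def ptSlope (a b : Point) : ℝ := (b.y - a.y) / (b.x - a.x)

theorem sigma_ne_ccw_iff (p q r : Point) :
    (σ p q r ≠ .ccw) ↔ Matrix.det !![p.x, q.x, r.x; p.y, q.y, r.y; 1, 1, 1] ≤ 0 := by
  simp only [σ]
  split_ifs with h1 h2 <;> simp <;> linarith

theorem sigma_ne_cw_iff (p q r : Point) :
    (σ p q r ≠ .cw) ↔ 0 ≤ Matrix.det !![p.x, q.x, r.x; p.y, q.y, r.y; 1, 1, 1] := by
  simp only [σ]
  split_ifs with h1 h2 <;> simp <;> linarith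

theorem glue_line_aux {S : Set Point} (cvx : ConvexPoints S) {a b : Point} (hab : a ≠ b)
    (ha : a ∈ S) (hb : b ∈ S) {m : Point} (hm : m ∈ convexHull ℝ S)
    {t : ℝ} (ht : 1 < t) (hmt : m = (1 - t) • a + t • b) : False := by
  have hane : a ∈ S \ {b} := ⟨ha, by simpa using hab⟩
  have hne : (S \ {b}).Nonempty := ⟨a, hane⟩
  have hS : convexHull ℝ S = convexJoin ℝ {b} (convexHull ℝ (S \ {b})) := by
    conv_lhs => rw [← Set.insert_eq_of_mem hb, ← Set.insert_diff_singleton]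
    exact convexHull_insert hne
  rw [hS, mem_convexJoin] at hm
  obtain ⟨b', hb', m', hm', hseg⟩ := hm
  rw [Set.mem_singleton_iff] at hb'
  rw [hb'] at hseg
  obtain ⟨l, u, hl, hu, hlu, hcomb⟩ := hseg
  have hl1 : l ≤ 1 := by linarith
  have hd : 0 < t - l := by linarith
  apply cvx b hb
  have hkey : ((t - 1)/(t - l)) • a + (u/(t - l)) • m' = b := by
    ext i
    have h1 := congrArg (fun v : Point => v i) hcomb
    have h2 := congrArg (fun v : Point => v i) hmt
    simp only [PiLp.add_apply, PiLp.smul_apply, smul_eq_mul] at h1 h2 ⊢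
    field_simp
    linear_combination h1 + h2
  have hsum : (t - 1)/(t - l) + u/(t - l) = 1 := by
    field_simp
    linarith
  have hbseg : b ∈ segment ℝ a m' :=
    ⟨(t - 1)/(t - l), u/(t - l), div_nonneg (by linarith) hd.le,
      div_nonneg hu hd.le, hsum, hkey⟩
  exact (convex_convexHull ℝ _).segment_subset (subset_convexHull ℝ _ hane) hm' hbseg

theorem glue_line {S : Set Point} (cvx : ConvexPoints S) {a b : Point} (hab : a ≠ b)
    (ha : a ∈ S) (hb : b ∈ S) {m : Point} (hm : m ∈ convexHull ℝ S)
    {t : ℝ} (hmt : m = (1 - t) • a + t • b) : m ∈ segment ℝ a b := by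
  rcases le_or_gt t 1 with h1 | h1
  · rcases le_or_gt 0 t with h0 | h0
    · exact ⟨1 - t, t, by linarith, h0, by ring, hmt.symm⟩
    · exfalso
      refine glue_line_aux cvx hab.symm hb ha hm (t := 1 - t) (by linarith) ?_
      rw [hmt]
      module
  · exact (glue_line_aux cvx hab ha hb hm h1 hmt).elim

theorem glue_key {S : Set Point} (cvx : ConvexPoints S) {a b : Point} (hab : a ≠ b)
    (ha : a ∈ S) (hb : b ∈ S) (g : Point → ℝ)
    (hg : ∀ t s : ℝ, t + s = 1 → ∀ x y : Point, g (t • x + s • y) = t * g x + s * g y)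
    (hga : g a = 0) (hgb : g b = 0)
    (hcol : ∀ m : Point, g m = 0 → ∃ t : ℝ, m = (1 - t) • a + t • b)
    {u w : Point} (hu : u ∈ convexHull ℝ {x ∈ S | g x ≤ 0})
    (hw : w ∈ convexHull ℝ {x ∈ S | 0 ≤ g x})
    {t s : ℝ} (htt : 0 ≤ t) (hss : 0 ≤ s) (hts : t + s = 1)
    (hp : g (t • u + s • w) ≤ 0) :
    t • u + s • w ∈ convexHull ℝ {x ∈ S | g x ≤ 0} := by
  have hconvneg : Convex ℝ {x : Point | g x ≤ 0} := by
    intro x hx y hy p q hp0 hq0 hpq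
    simp only [Set.mem_setOf_eq] at *
    rw [hg p q hpq x y]; nlinarith
  have hconvpos : Convex ℝ {x : Point | 0 ≤ g x} := by
    intro x hx y hy p q hp0 hq0 hpq
    simp only [Set.mem_setOf_eq] at *
    rw [hg p q hpq x y]; nlinarith
  have hgu : g u ≤ 0 := convexHull_min (fun x hx => hx.2) hconvneg hu
  have hgw : 0 ≤ g w := convexHull_min (fun x hx => hx.2) hconvpos hw
  have huS : u ∈ convexHull ℝ S := convexHull_mono (Set.sep_subset _ _) hu
  have hwS : w ∈ convexHull ℝ S := convexHull_mono (Set.sep_subset _ _) hw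
  have habneg : segment ℝ a b ⊆ convexHull ℝ {x ∈ S | g x ≤ 0} :=
    (convex_convexHull ℝ _).segment_subset (subset_convexHull ℝ _ ⟨ha, hga.le⟩)
      (subset_convexHull ℝ _ ⟨hb, hgb.le⟩)
  have hCneg : Convex ℝ (convexHull ℝ {x ∈ S | g x ≤ 0}) := convex_convexHull ℝ _
  rcases eq_or_lt_of_le hgw with hw0 | hw0
  · have hwseg : w ∈ convexHull ℝ {x ∈ S | g x ≤ 0} := by
      obtain ⟨t', hw'⟩ := hcol w hw0.symm
      exact habneg (glue_line cvx hab ha hb hwS hw')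
    exact hCneg hu hwseg htt hss hts
  rcases eq_or_lt_of_le hgu with hu0 | hu0
  · have hgp : t * g u + s * g w ≤ 0 := by rw [← hg t s hts u w]; exact hp
    have hs0 : s = 0 := by nlinarith
    have ht1 : t = 1 := by linarith
    rw [hs0, ht1, one_smul, zero_smul, add_zero]
    exact hu
  · set r := g w / (g w - g u) with hr
    have hden : 0 < g w - g u := by linarith
    have hrden : r * (g w - g u) = g w := div_mul_cancel₀ _ (ne_of_gt hden)
    have hr0 : 0 < r := div_pos hw0 hden
    have hr1 : r < 1 := by rw [hr, div_lt_one hden]; linarith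
    have hgm : g (r • u + (1 - r) • w) = 0 := by
      rw [hg r (1 - r) (by ring) u w]
      linear_combination -hrden
    set m := r • u + (1 - r) • w with hmdef
    have hmS : m ∈ convexHull ℝ S :=
      (convex_convexHull ℝ S) huS hwS hr0.le (by linarith) (by ring)
    have hmseg : m ∈ convexHull ℝ {x ∈ S | g x ≤ 0} := by
      obtain ⟨t', hm'⟩ := hcol m hgm
      exact habneg (glue_line cvx hab ha hb hmS hm')
    have hgp : t * g u + s * g w ≤ 0 := by rw [← hg t s hts u w]; exact hp
    have hrt : r ≤ t := by
      rw [hr, div_le_iff₀ hden]; nlinarith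
    set μ := (t - r)/(1 - r) with hμ
    have h1r : 0 < 1 - r := by linarith
    have hμ0 : 0 ≤ μ := div_nonneg (by linarith) h1r.le
    have hμ1 : μ ≤ 1 := by rw [hμ, div_le_one h1r]; linarith
    have hps : t • u + s • w = μ • u + (1 - μ) • m := by
      ext i
      have hμr : μ * (1 - r) = t - r := by rw [hμ]; field_simp
      have hs' : s = 1 - t := by linarith
      simp only [hmdef, PiLp.add_apply, PiLp.smul_apply, smul_eq_mul]
      linear_combination (w i - u i) * hμr + w i * hs'
    rw [hps]
    exact hCneg hu hmseg hμ0 (by linarith) (by ring)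

theorem glue_split {S : Set Point} (cvx : ConvexPoints S) {a b : Point} (hab : a ≠ b)
    (ha : a ∈ S) (hb : b ∈ S) (g : Point → ℝ)
    (hg : ∀ t s : ℝ, t + s = 1 → ∀ x y : Point, g (t • x + s • y) = t * g x + s * g y)
    (hga : g a = 0) (hgb : g b = 0)
    (hcol : ∀ m : Point, g m = 0 → ∃ t : ℝ, m = (1 - t) • a + t • b) :
    convexHull ℝ S ⊆ convexHull ℝ {x ∈ S | g x ≤ 0} ∪ convexHull ℝ {x ∈ S | 0 ≤ g x} := by
  have hEq1 : {x ∈ S | 0 ≤ g x} = {x ∈ S | (fun z => -g z) x ≤ 0} := by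
    ext x; simp [neg_nonpos]
  have hEq2 : {x ∈ S | g x ≤ 0} = {x ∈ S | 0 ≤ (fun z => -g z) x} := by
    ext x; simp [neg_nonneg]
  have keypos : ∀ {u w : Point}, u ∈ convexHull ℝ {x ∈ S | 0 ≤ g x} →
      w ∈ convexHull ℝ {x ∈ S | g x ≤ 0} → ∀ {t s : ℝ}, 0 ≤ t → 0 ≤ s → t + s = 1 →
      0 ≤ g (t • u + s • w) → t • u + s • w ∈ convexHull ℝ {x ∈ S | 0 ≤ g x} := by
    intro u w hu hw t s htt hss hts hp
    rw [hEq1] at hu ⊢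
    rw [hEq2] at hw
    exact glue_key cvx hab ha hb _ (fun t s h x y => by simp only [hg t s h x y]; ring)
      (by simp [hga]) (by simp [hgb]) (fun m hm => hcol m (by simpa using hm))
      hu hw htt hss hts (by simpa using hp)
  apply convexHull_min
  · intro x hx
    rcases le_total (g x) 0 with h | h
    · exact Or.inl (subset_convexHull ℝ _ ⟨hx, h⟩)
    · exact Or.inr (subset_convexHull ℝ _ ⟨hx, h⟩)
  · intro u hu w hw t s htt hss hts
    rcases hu with hu | hu <;> rcases hw with hw | hw
    · exact Or.inl ((convex_convexHull ℝ _) hu hw htt hss hts)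
    · rcases le_total (g (t • u + s • w)) 0 with hp | hp
      · exact Or.inl (glue_key cvx hab ha hb g hg hga hgb hcol hu hw htt hss hts hp)
      · refine Or.inr ?_
        have := keypos hw hu hss htt (by linarith) (by rwa [add_comm])
        rwa [add_comm] at this
    · rcases le_total (g (t • u + s • w)) 0 with hp | hp
      · refine Or.inl ?_
        have := glue_key cvx hab ha hb g hg hga hgb hcol hw hu hss htt (by linarith)
          (by rwa [add_comm])
        rwa [add_comm] at this
      · exact Or.inr (keypos hu hw htt hss hts hp)
    · exact Or.inr ((convex_convexHull ℝ _) hu hw htt hss hts)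


theorem EmptyShapeIn.glue {S P : Set Point} (cvx : ConvexPoints S) {a b : Point}
    (ha : a ∈ S) (hb : b ∈ S)
    (h₁ : EmptyShapeIn {x ∈ S | σ a b x ≠ .ccw} P)
    (h₂ : EmptyShapeIn {x ∈ S | σ a b x ≠ .cw} P) :
    EmptyShapeIn S P := by
  by_cases hab : a = b
  · subst hab
    have hset : {x ∈ S | σ a a x ≠ Orient.ccw} = S := by
      ext x
      simp only [Set.mem_setOf_eq, and_iff_left_iff_imp]
      intro _
      rw [sigma_ne_ccw_iff]
      have hz : Matrix.det !![a.x, a.x, x.x; a.y, a.y, x.y; 1, 1, 1] = 0 := by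
        simp [Matrix.det_fin_three]
      rw [hz]
    rw [hset] at h₁
    exact h₁
  · intro p hp hmem
    set g : Point → ℝ := fun x => (b.x - a.x) * (x.y - a.y) - (b.y - a.y) * (x.x - a.x)
      with hgdef
    have hdet : ∀ x : Point,
        Matrix.det !![a.x, b.x, x.x; a.y, b.y, x.y; 1, 1, 1] = g x := by
      intro x; simp [Matrix.det_fin_three, hgdef]; ring
    have hset1 : {x ∈ S | σ a b x ≠ Orient.ccw} = {x ∈ S | g x ≤ 0} := by
      ext x; rw [Set.mem_setOf_eq, Set.mem_setOf_eq, sigma_ne_ccw_iff, hdet]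
    have hset2 : {x ∈ S | σ a b x ≠ Orient.cw} = {x ∈ S | 0 ≤ g x} := by
      ext x; rw [Set.mem_setOf_eq, Set.mem_setOf_eq, sigma_ne_cw_iff, hdet]
    rw [hset1] at h₁
    rw [hset2] at h₂
    have hg : ∀ t s : ℝ, t + s = 1 → ∀ x y : Point, g (t • x + s • y) = t * g x + s * g y := by
      intro t s hts x y
      have hs : s = 1 - t := by linarith
      subst hs
      simp only [hgdef, Point.x, Point.y, PiLp.add_apply, PiLp.smul_apply, smul_eq_mul]
      ring
    have hga : g a = 0 := by simp [hgdef]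
    have hgb : g b = 0 := by simp [hgdef]; ring
    have hcol : ∀ m : Point, g m = 0 → ∃ t : ℝ, m = (1 - t) • a + t • b := by
      intro m hm
      simp only [hgdef] at hm
      have hne : (b.x - a.x)^2 + (b.y - a.y)^2 ≠ 0 := by
        intro h
        apply hab
        have h1 : b.x - a.x = 0 := by nlinarith [sq_nonneg (b.x - a.x), sq_nonneg (b.y - a.y)]
        have h2 : b.y - a.y = 0 := by nlinarith [sq_nonneg (b.x - a.x), sq_nonneg (b.y - a.y)]
        ext i
        fin_cases i
        · show a.x = b.x
          linarith
        · show a.y = b.y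
          linarith
      have key0 : (m.x - a.x) * ((b.x - a.x)^2 + (b.y - a.y)^2)
          = ((b.x - a.x) * (m.x - a.x) + (b.y - a.y) * (m.y - a.y)) * (b.x - a.x) := by
        linear_combination (-(b.y - a.y)) * hm
      have key1 : (m.y - a.y) * ((b.x - a.x)^2 + (b.y - a.y)^2)
          = ((b.x - a.x) * (m.x - a.x) + (b.y - a.y) * (m.y - a.y)) * (b.y - a.y) := by
        linear_combination (b.x - a.x) * hm
      refine ⟨((b.x - a.x) * (m.x - a.x) + (b.y - a.y) * (m.y - a.y)) /
        ((b.x - a.x)^2 + (b.y - a.y)^2), ?_⟩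
      ext i
      fin_cases i
      · show m.x = _
        simp only [PiLp.add_apply, PiLp.smul_apply, smul_eq_mul]
        show m.x = _ * a.x + _ * b.x
        field_simp
        linear_combination key0
      · show m.y = _
        simp only [PiLp.add_apply, PiLp.smul_apply, smul_eq_mul]
        show m.y = _ * a.y + _ * b.y
        field_simp
        linear_combination key1
    have hsplit := glue_split cvx hab ha hb g hg hga hgb hcol hmem
    rcases hsplit with h | h
    · exact h₁ p ⟨hp.1, fun hc => hp.2 hc.1⟩ h
    · exact h₂ p ⟨hp.1, fun hc => hp.2 hc.1⟩ h
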